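/- arXiv:2101.05594 — 3 statements merged into one kernel-verified Lean document; each statement's English description precedes it below -/
import Mathlib

section
/- Let X be a real vector space containing two linearly independent vectors (dim X ≥ 2, possibly infinite) and let γ be a gauge on X. Then γ is a norm (i.e., additionally γ(−x) = γ(x) for all x ∈ X) if and only if every straight line K = {x + t·v : t ∈ ℝ} (with x, v ∈ X, v ≠ 0) is coproximinal in (X, γ). -/
/-- A gauge on a real vector space: nonnegative, vanishing exactly at `0`,
positively homogeneous, and subadditive. -/
def IsGauge {X : Type*} [AddCommGroup X] [Module ℝ X] (γ : X → ℝ) : Prop :=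
  (∀ x, 0 ≤ γ x) ∧ (∀ x, γ x = 0 ↔ x = 0) ∧
    (∀ (l : ℝ) (x : X), 0 < l → γ (l • x) = l * γ x) ∧
    (∀ x y, γ (x + y) ≤ γ x + γ y)

/-- `K` is coproximinal: every point of the space has a best coapproximation in `K`. -/
def Coproximinal {X : Type*} [AddCommGroup X] (γ : X → ℝ) (K : Set X) : Prop :=
  ∀ y : X, ∃ x ∈ K, ∀ z ∈ K, γ (x - z) ≤ γ (y - z)

/-!
For a line `p + ℝ v`, the sets `{s | γ ((s - t) • v) ≤ γ (y - (p + t • v))}` are intervals, so by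
Helly's theorem on `ℝ` the line is coproximinal iff they meet pairwise, i.e. iff
`r γ(v) γ(-v) ≤ γ(v) γ(a) + γ(-v) γ(a + r v)` for all `a` and `r > 0`. For a norm this is the triangle
inequality.

Conversely, put `M t = γ (x + t u)` and `N t = γ (-(x + t u))` on a line missing the origin. The
inequality with `v = x + t u`, `a = -(x + (t - ε) u)`, `r = 2` reads
`M (t + ε) / M t + N (t - ε) / N t ≥ 2`, so `log N t - log N (t - ε) ≤ log M (t + ε) - log M t + O(ε²)`.
Telescoping over a fine partition of `[0, T]` gives `N T / N 0 ≤ M T / M 0`, and the same with `x, u`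
replaced by `-x, -u` gives equality: the ratio `γ z / γ (-z)` is constant on such lines. Hence for
independent `x, u` the ratio at `x` equals the ratio at `x + u`, which equals the ratio at `u`; doing
the same for `-x` forces `γ (-x) = γ x`.
-/

open Real Set Filter Topology

theorem exists_forall_le_and_le {ι : Type*} [Nonempty ι] {l u : ι → ℝ}
    (h : ∀ i j, l i ≤ u j) : ∃ s, ∀ i, l i ≤ s ∧ s ≤ u i :=
  ⟨⨆ i, l i, fun i =>
    ⟨le_ciSup ⟨u i, forall_mem_range.2 fun j => h j i⟩ i, ciSup_le fun j => h j i⟩⟩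

theorem Real.neg_two_mul_le_log_one_sub {y : ℝ} (hy₀ : 0 ≤ y) (hy : y ≤ 1 / 2) :
    -(2 * y) ≤ log (1 - y) := by
  refine le_trans ?_ (one_sub_inv_le_log_of_pos (x := 1 - y) (by linarith))
  have : (1 - y)⁻¹ ≤ 1 + 2 * y := by
    rw [inv_le_iff_one_le_mul₀ (by linarith)]
    nlinarith
  linarith

theorem log_sub_log_le_of_two_mul_le {M₀ M₁ N₀ N₁ δ : ℝ} (hM₀ : 0 < M₀) (hN₀ : 0 < N₀)
    (hN₁ : 0 < N₁) (h : 2 * (M₀ * N₀) ≤ M₀ * N₁ + N₀ * M₁) (hδ : |N₀ - N₁| ≤ δ * N₀)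
    (hδ₂ : δ ≤ 1 / 2) :
    log N₀ - log N₁ ≤ log M₁ - log M₀ + 2 * δ ^ 2 := by
  set e := (N₀ - N₁) / N₀
  have he : |e| ≤ δ := by rwa [abs_div, abs_of_pos hN₀, div_le_iff₀ hN₀]
  have he₂ : e ^ 2 ≤ δ ^ 2 := sq_le_sq' (neg_le_of_abs_le he) (le_of_abs_le he)
  have hδ₀ : 0 ≤ δ := (abs_nonneg e).trans he
  have hprod : M₀ * N₀ * (1 - e ^ 2) ≤ M₁ * N₁ :=
    calc M₀ * N₀ * (1 - e ^ 2) = M₀ * (2 * N₀ - N₁) * N₁ / N₀ := by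
          simp only [e]; field_simp; ring
      _ ≤ N₀ * M₁ * N₁ / N₀ := by gcongr ?_ * _ / _; linarith
      _ = M₁ * N₁ := by field_simp
  have hpos : 0 < M₀ * N₀ * (1 - e ^ 2) := by
    have : 0 < 1 - e ^ 2 := by nlinarith
    positivity
  have hM₁ : M₁ ≠ 0 := left_ne_zero_of_mul (hpos.trans_le hprod).ne'
  have hlog := log_le_log hpos hprod
  rw [log_mul (by positivity) (by nlinarith), log_mul hM₀.ne' hN₀.ne', log_mul hM₁ hN₁.ne']
    at hlog
  linarith [Real.neg_two_mul_le_log_one_sub (sq_nonneg e) (by nlinarith)]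

theorem sub_le_sub_add_mul_of_step_le {f g : ℝ → ℝ} {Δ c : ℝ} (n : ℕ)
    (hstep : ∀ k < n, g (k * Δ) - g (k * Δ - Δ) ≤ f (k * Δ + Δ) - f (k * Δ) + c) :
    g (n * Δ - Δ) - g (-Δ) ≤ f (n * Δ) - f 0 + n * c := by
  induction n with
  | zero => simp
  | succ n ih =>
    have h₁ := ih fun k hk => hstep k (hk.trans n.lt_succ_self)
    have h₂ := hstep n n.lt_succ_self
    push_cast
    rw [add_mul, one_mul, add_sub_cancel_right]
    linarith

theorem sub_le_sub_of_eventually_step_le {f g : ℝ → ℝ} (hg : Continuous g) {T C : ℝ}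
    (hT : 0 < T)
    (hstep : ∀ᶠ ε in 𝓝[>] 0, ∀ t ∈ Icc 0 T, g t - g (t - ε) ≤ f (t + ε) - f t + C * ε ^ 2) :
    g T - g 0 ≤ f T - f 0 := by
  set φ : ℝ → ℝ := fun Δ => g (T - Δ) - g (-Δ) - C * T * Δ
  have hφ : Tendsto φ (𝓝 0) (𝓝 (g T - g 0)) := by
    have : Continuous φ := by fun_prop
    simpa [φ] using this.tendsto 0
  have hΔ : Tendsto (fun n : ℕ => T / n) atTop (𝓝[>] 0) :=
    tendsto_nhdsWithin_iff.2 ⟨tendsto_const_div_atTop_nhds_zero_nat T,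
      (eventually_gt_atTop 0).mono fun n hn => div_pos hT (Nat.cast_pos.2 hn)⟩
  refine le_of_tendsto ((hφ.mono_left nhdsWithin_le_nhds).comp hΔ) ?_
  filter_upwards [hΔ.eventually hstep, eventually_gt_atTop 0] with n hn hn₀
  have hn₀' : (0 : ℝ) < n := Nat.cast_pos.2 hn₀
  have hnΔ : (n : ℝ) * (T / n) = T := mul_div_cancel₀ T hn₀'.ne'
  have htel := sub_le_sub_add_mul_of_step_le (f := f) (g := g) (c := C * (T / n) ^ 2) n
    fun k hk => hn _ ⟨by positivity,
      (mul_le_mul_of_nonneg_right (by exact_mod_cast hk.le) (by positivity)).trans hnΔ.le⟩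
  have herr : (n : ℝ) * (C * (T / n) ^ 2) = C * T * (T / n) := by field_simp
  rw [hnΔ, herr] at htel
  simp only [Function.comp, φ]
  linarith

namespace IsGauge

variable {X : Type*} [AddCommGroup X] [Module ℝ X] {γ : X → ℝ}

theorem map_zero (hγ : IsGauge γ) : γ 0 = 0 := (hγ.2.1 0).2 rfl

theorem pos (hγ : IsGauge γ) {x : X} (hx : x ≠ 0) : 0 < γ x :=
  (hγ.1 x).lt_of_ne fun h => hx ((hγ.2.1 x).1 h.symm)

theorem map_smul_eq_max (hγ : IsGauge γ) (r : ℝ) (x : X) :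
    γ (r • x) = max (r * γ x) (-r * γ (-x)) := by
  have := hγ.1 x
  have := hγ.1 (-x)
  rcases lt_trichotomy r 0 with hr | rfl | hr
  · rw [← neg_smul_neg, hγ.2.2.1 _ _ (neg_pos.2 hr), max_eq_right (by nlinarith)]
  · simp [hγ.map_zero]
  · rw [hγ.2.2.1 _ _ hr, max_eq_left (by nlinarith)]

theorem sub_le (hγ : IsGauge γ) (x y : X) : γ x - γ y ≤ γ (x - y) := by
  have := hγ.2.2.2 (x - y) y
  rw [sub_add_cancel] at this
  linarith

theorem abs_map_add_smul_sub_le (hγ : IsGauge γ) (x u : X) (s r : ℝ) :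
    |γ (x + s • u) - γ (x + r • u)| ≤ (γ u + γ (-u)) * |s - r| := by
  have key : ∀ s r : ℝ, γ (x + s • u) - γ (x + r • u) ≤ (γ u + γ (-u)) * |s - r| := by
    intro s r
    have hu := hγ.1 u
    have hu' := hγ.1 (-u)
    have habs := abs_nonneg (s - r)
    calc γ (x + s • u) - γ (x + r • u) ≤ γ ((s - r) • u) := by
          rw [sub_smul]; convert hγ.sub_le _ _ using 2; abel
      _ = max ((s - r) * γ u) (-(s - r) * γ (-u)) := hγ.map_smul_eq_max _ _
      _ ≤ (γ u + γ (-u)) * |s - r| :=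
        max_le (by nlinarith [mul_le_mul_of_nonneg_right (le_abs_self (s - r)) hu])
          (by nlinarith [mul_le_mul_of_nonneg_right (neg_le_abs (s - r)) hu'])
  rw [abs_sub_le_iff]
  exact ⟨key s r, abs_sub_comm s r ▸ key r s⟩

theorem coproximinal_line_iff (hγ : IsGauge γ) (p : X) {v : X} (hv : v ≠ 0) :
    Coproximinal γ {q | ∃ t : ℝ, q = p + t • v} ↔
      ∀ (a : X) (r : ℝ), 0 < r → r * (γ v * γ (-v)) ≤ γ v * γ a + γ (-v) * γ (a + r • v) := by
  have hA := hγ.pos hv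
  have hB := hγ.pos (neg_ne_zero.2 hv)
  constructor
  · intro hco a r hr
    obtain ⟨_, ⟨s, rfl⟩, hbest⟩ := hco (p + a)
    have h₀ := hbest p ⟨0, by simp⟩
    have h₁ := hbest (p + (-r) • v) ⟨-r, rfl⟩
    rw [show p + s • v - p = s • v by abel, add_sub_cancel_left, hγ.map_smul_eq_max] at h₀
    rw [show p + s • v - (p + (-r) • v) = (s + r) • v by module,
      show p + a - (p + (-r) • v) = a + r • v by module, hγ.map_smul_eq_max] at h₁
    nlinarith [mul_le_mul_of_nonneg_left ((le_max_right _ _).trans h₀) hA.le,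
      mul_le_mul_of_nonneg_left ((le_max_left _ _).trans h₁) hB.le]
  · intro hchord y
    set g : ℝ → ℝ := fun t => γ (y - (p + t • v))
    obtain ⟨s, hs⟩ := exists_forall_le_and_le (l := fun t => t - g t / γ (-v))
      (u := fun t => t + g t / γ v) fun t t' => by
        rcases le_or_gt t t' with htt' | htt'
        · have := div_nonneg (hγ.1 (y - (p + t • v))) hB.le
          have := div_nonneg (hγ.1 (y - (p + t' • v))) hA.le
          linarith
        · have := hchord (y - (p + t • v)) (t - t') (sub_pos.2 htt')
          rw [show y - (p + t • v) + (t - t') • v = y - (p + t' • v) by module] at this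
          have : t - t' ≤ g t / γ (-v) + g t' / γ v := by
            rw [div_add_div _ _ hB.ne' hA.ne', le_div_iff₀ (by positivity)]
            linarith
          linarith
    refine ⟨p + s • v, ⟨s, rfl⟩, ?_⟩
    rintro _ ⟨t, rfl⟩
    obtain ⟨hl, hu⟩ := hs t
    rw [show p + s • v - (p + t • v) = (s - t) • v by module, hγ.map_smul_eq_max]
    refine max_le ?_ ?_
    · rwa [← le_div_iff₀ hA, sub_le_iff_le_add']
    · rw [neg_sub, ← le_div_iff₀ hB, sub_le_comm]
      exact hl

theorem coproximinal_line_of_map_neg (hγ : IsGauge γ) (hsymm : ∀ x, γ (-x) = γ x) (p : X)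
    {v : X} (hv : v ≠ 0) : Coproximinal γ {q | ∃ t : ℝ, q = p + t • v} := by
  refine (hγ.coproximinal_line_iff p hv).2 fun a r hr => ?_
  have : r * γ v ≤ γ a + γ (a + r • v) :=
    calc r * γ v = γ (-a + (a + r • v)) := by rw [neg_add_cancel_left, hγ.2.2.1 r v hr]
      _ ≤ γ a + γ (a + r • v) := hsymm a ▸ hγ.2.2.2 _ _
  rw [hsymm]
  nlinarith [hγ.1 v]

theorem map_neg_line_mul_le (hγ : IsGauge γ)
    (hco : ∀ p v : X, v ≠ 0 → Coproximinal γ {q : X | ∃ t : ℝ, q = p + t • v})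
    {x u : X} (hxu : ∀ t : ℝ, x + t • u ≠ 0) {T : ℝ} (hT : 0 < T) :
    γ (-x + T • -u) * γ x ≤ γ (x + T • u) * γ (-x) := by
  set M : ℝ → ℝ := fun t => γ (x + t • u)
  set N : ℝ → ℝ := fun t => γ (-x + t • -u)
  have hneg : ∀ t : ℝ, -x + t • -u = -(x + t • u) := fun t => by module
  have hM : ∀ t, 0 < M t := fun t => hγ.pos (hxu t)
  have hN : ∀ t, 0 < N t := fun t => by
    simp only [N, hneg]
    exact hγ.pos (neg_ne_zero.2 (hxu t))
  set L := γ (-u) + γ (- -u)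
  have hL : 0 ≤ L := add_nonneg (hγ.1 _) (hγ.1 _)
  have hNlip : ∀ s r, |N s - N r| ≤ L * |s - r| := hγ.abs_map_add_smul_sub_le (-x) (-u)
  have hNcont : Continuous N := (LipschitzWith.of_dist_le_mul (K := L.toNNReal) fun s r => by
    simpa [Real.dist_eq, Real.coe_toNNReal _ hL] using hNlip s r).continuous
  obtain ⟨t₀, -, hmin⟩ := isCompact_Icc.exists_isMinOn (nonempty_Icc.2 hT.le) hNcont.continuousOn
  have hNt₀ := hN t₀
  have hchord : ∀ t ε, 2 * (M t * N t) ≤ M t * N (t - ε) + N t * M (t + ε) := fun t ε => by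
    have := (hγ.coproximinal_line_iff 0 (hxu t)).1 (hco 0 _ (hxu t)) (-x + (t - ε) • -u) 2 two_pos
    rwa [show -x + (t - ε) • -u + (2 : ℝ) • (x + t • u) = x + (t + ε) • u by module, ← hneg]
      at this
  have hsmall : ∀ᶠ ε in 𝓝[>] (0 : ℝ), 0 < ε ∧ L * ε < N t₀ / 2 :=
    eventually_mem_nhdsWithin.and <| nhdsWithin_le_nhds <|
      (continuous_const.mul continuous_id).tendsto' 0 0 (by simp) |>.eventually_lt_const
        (by positivity)
  have hstep : ∀ᶠ ε in 𝓝[>] 0, ∀ t ∈ Icc 0 T,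
      log (N t) - log (N (t - ε)) ≤ log (M (t + ε)) - log (M t) + 2 * (L / N t₀) ^ 2 * ε ^ 2 := by
    filter_upwards [hsmall] with ε ⟨hε, hLε⟩ t ht
    have hlip : |N t - N (t - ε)| ≤ L * ε / N t₀ * N t := by
      calc |N t - N (t - ε)| ≤ L * ε := by simpa [abs_of_pos hε] using hNlip t (t - ε)
        _ ≤ L * ε / N t₀ * N t := by
          rw [div_mul_eq_mul_div, le_div_iff₀ hNt₀]
          exact mul_le_mul_of_nonneg_left (hmin ht) (by positivity)
    have hδ : L * ε / N t₀ ≤ 1 / 2 := by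
      rw [div_le_iff₀ hNt₀]
      linarith
    convert log_sub_log_le_of_two_mul_le (hM t) (hN t) (hN _) (hchord t ε) hlip hδ using 2
    ring
  have := sub_le_sub_of_eventually_step_le (f := fun t => log (M t)) (g := fun t => log (N t))
    (hNcont.log fun t => (hN t).ne') hT hstep
  have hx : 0 < γ x := by simpa [M] using hM 0
  have hx' : 0 < γ (-x) := by simpa [N] using hN 0
  simp only [M, N, zero_smul, add_zero] at this
  rw [← log_le_log_iff (mul_pos (hN T) hx) (mul_pos (hM T) hx'),
    log_mul (hN T).ne' hx.ne', log_mul (hM T).ne' hx'.ne']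
  linarith

theorem map_line_mul_neg_eq (hγ : IsGauge γ)
    (hco : ∀ p v : X, v ≠ 0 → Coproximinal γ {q : X | ∃ t : ℝ, q = p + t • v})
    {x u : X} (hxu : ∀ t : ℝ, x + t • u ≠ 0) {T : ℝ} (hT : 0 < T) :
    γ (x + T • u) * γ (-x) = γ (-x + T • -u) * γ x := by
  refine le_antisymm ?_ (hγ.map_neg_line_mul_le hco hxu hT)
  have hxu' : ∀ t : ℝ, -x + t • -u ≠ 0 := fun t => by
    rw [smul_neg, ← neg_add]
    exact neg_ne_zero.2 (hxu t)
  simpa only [neg_neg] using hγ.map_neg_line_mul_le hco hxu' hT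

theorem mul_map_neg_eq_of_linearIndependent (hγ : IsGauge γ)
    (hco : ∀ p v : X, v ≠ 0 → Coproximinal γ {q : X | ∃ t : ℝ, q = p + t • v})
    {x u : X} (hxu : LinearIndependent ℝ ![x, u]) :
    γ x * γ (-u) = γ (-x) * γ u := by
  have hne : ∀ {a b : X}, LinearIndependent ℝ ![a, b] → ∀ t : ℝ, a + t • b ≠ 0 :=
    fun h t hab => one_ne_zero (LinearIndependent.pair_iff.1 h 1 t (by rwa [one_smul])).1
  have h₁ := hγ.map_line_mul_neg_eq hco (hne hxu) one_pos
  have h₂ := hγ.map_line_mul_neg_eq hco (hne (LinearIndependent.pair_symm_iff.1 hxu)) one_pos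
  rw [one_smul, one_smul] at h₁ h₂
  rw [add_comm u, add_comm (-u)] at h₂
  have hP := hγ.pos (hne hxu 1)
  rw [one_smul] at hP
  refine mul_left_cancel₀ hP.ne' ?_
  linear_combination γ x * h₂ - γ u * h₁

end IsGauge

theorem stmt_1 {X : Type*} [AddCommGroup X] [Module ℝ X]
    (hdim : ∃ u v : X, LinearIndependent ℝ ![u, v]) (γ : X → ℝ) (hγ : IsGauge γ) :
    (∀ x : X, γ (-x) = γ x) ↔
      (∀ p v : X, v ≠ 0 → Coproximinal γ {q : X | ∃ t : ℝ, q = p + t • v}) := by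
  refine ⟨fun hsymm p v hv => hγ.coproximinal_line_of_map_neg hsymm p hv, fun hco x => ?_⟩
  rcases eq_or_ne x 0 with rfl | hx
  · rw [neg_zero]
  obtain ⟨a, b, hab⟩ := hdim
  obtain ⟨u, hxu⟩ := exists_linearIndependent_pair_of_one_lt_rank
    (Cardinal.one_lt_two.trans_le (Module.le_rank_iff.2 ⟨_, hab⟩)) hx
  have h₁ := hγ.mul_map_neg_eq_of_linearIndependent hco hxu
  have h₂ := hγ.mul_map_neg_eq_of_linearIndependent hco (LinearIndependent.pair_neg_left_iff.2 hxu)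
  rw [neg_neg] at h₂
  have hu : 0 < γ u := hγ.pos (by simpa using hxu.ne_zero 1)
  have hu' := hγ.1 (-u)
  have : (γ (-x) - γ x) * (γ u + γ (-u)) = 0 := by linear_combination h₂ - h₁
  exact sub_eq_zero.1 ((mul_eq_zero.1 this).resolve_right (by positivity))
end

section
/- Let X = ℓ¹ be the space of absolutely summable real sequences, equipped with the gauge γ(ξ₁, ξ₂, …) = max{ sup_{i ≥ 1} |ξ_i|, Σ_{i=1}^∞ ξ_i }. Then the closed unit ball B = {x ∈ ℓ¹ : γ(x) ≤ 1} is not sequentially closed with respect to γ-convergence: for x₀ = (1, 1/2, 1/4, 1/8, …) one has γ(x₀) = 2 (so x₀ ∉ B), while the sequence y_n := x₀ − x_n, where x_n = (1/n, …, 1/n, 0, 0, …) has n entries equal to 1/n, satisfies γ(y_n) = 1 for all n ≥ 1 and lim_{n → ∞} γ(y_n − x₀) = 0. -/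
/-! The gauge is not symmetric: `γ(-xₙ) = 1/n` because the sum of `-xₙ` is negative, although
`γ(xₙ) = 1`. Hence `yₙ = x₀ - xₙ` γ-converges to `x₀`, while subtracting `xₙ` lowers the sum
`2` of `x₀` to `1` and keeps all coordinates in `[-1, 1]`, so `γ(yₙ) = 1 < 2 = γ(x₀)`. -/

open Filter Topology

/-- The gauge `γ(ξ₁,ξ₂,…) = max { supᵢ |ξᵢ| , Σᵢ ξᵢ }` on `ℓ¹`. -/
noncomputable def gammaL1 (f : lp (fun _ : ℕ => ℝ) 1) : ℝ :=
  max (⨆ i : ℕ, |f i|) (∑' i : ℕ, f i)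

local notation "ℓ¹" => lp (fun _ : ℕ => ℝ) 1

section Gauge

variable {f : ℓ¹} {c : ℝ}

lemma gammaL1_nonneg : 0 ≤ gammaL1 f :=
  le_max_of_le_left (Real.iSup_nonneg fun _ => abs_nonneg _)

lemma gammaL1_le (hf : ∀ i, |f i| ≤ c) (hsum : ∑' i, f i ≤ c) : gammaL1 f ≤ c :=
  max_le (ciSup_le hf) hsum

lemma gammaL1_eq_tsum (hf : ∀ i, |f i| ≤ c) (hsum : c ≤ ∑' i, f i) :
    gammaL1 f = ∑' i, f i :=
  max_eq_right ((ciSup_le hf).trans hsum)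

end Gauge

lemma memℓp_one_geometric_half : Memℓp (fun i : ℕ => (1 / 2 : ℝ) ^ i) 1 :=
  memℓp_gen <| by simpa [abs_of_nonneg] using summable_geometric_two

lemma memℓp_one_blockAvg (n : ℕ) : Memℓp (fun i : ℕ => if i < n then (1 : ℝ) / n else 0) 1 :=
  (memℓp_zero <| (Set.finite_Iio n).subset fun i hi => by
    by_contra h; exact hi (if_neg h)).of_exponent_ge bot_le

-- `geomL1` and `blockAvg n` are the paper's `x₀` and `xₙ`.
noncomputable def geomL1 : ℓ¹ := ⟨fun i => (1 / 2 : ℝ) ^ i, memℓp_one_geometric_half⟩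

noncomputable def blockAvg (n : ℕ) : ℓ¹ :=
  ⟨fun i => if i < n then (1 : ℝ) / n else 0, memℓp_one_blockAvg n⟩

lemma coe_geomL1 : ⇑geomL1 = fun i => (1 / 2 : ℝ) ^ i := rfl

lemma coe_blockAvg (n : ℕ) : ⇑(blockAvg n) = fun i => if i < n then (1 : ℝ) / n else 0 := rfl

lemma geomL1_mem_Icc (i : ℕ) : geomL1 i ∈ Set.Icc 0 1 := by
  rw [coe_geomL1]
  exact ⟨by positivity, pow_le_one₀ (by norm_num) (by norm_num)⟩

lemma blockAvg_nonneg (n i : ℕ) : 0 ≤ blockAvg n i := by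
  rw [coe_blockAvg]; positivity

lemma blockAvg_le (n i : ℕ) : blockAvg n i ≤ 1 / n := by
  simp only [coe_blockAvg]
  split_ifs
  · exact le_rfl
  · positivity

lemma summable_geomL1 : Summable geomL1 := summable_geometric_two

lemma summable_blockAvg (n : ℕ) : Summable (blockAvg n) :=
  summable_of_ne_finset_zero (s := Finset.range n) fun i hi =>
    if_neg (by simpa using hi)

lemma tsum_geomL1 : ∑' i, geomL1 i = 2 := tsum_geometric_two

lemma tsum_blockAvg {n : ℕ} (hn : n ≠ 0) : ∑' i, blockAvg n i = 1 := by
  rw [coe_blockAvg, tsum_eq_sum (s := Finset.range n) fun i hi => if_neg (by simpa using hi),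
    Finset.sum_congr rfl fun i hi => if_pos (Finset.mem_range.mp hi)]
  simp [hn]

lemma gammaL1_geomL1 : gammaL1 geomL1 = 2 := by
  rw [gammaL1_eq_tsum (c := 1) (fun i => ?_) (by rw [tsum_geomL1]; norm_num), tsum_geomL1]
  obtain ⟨h0, h1⟩ := geomL1_mem_Icc i
  rwa [abs_of_nonneg h0]

lemma gammaL1_geomL1_sub_blockAvg {n : ℕ} (hn : 1 ≤ n) :
    gammaL1 (geomL1 - blockAvg n) = 1 := by
  have hsum : ∑' i, (geomL1 - blockAvg n) i = 1 := by
    simp only [lp.coeFn_sub, Pi.sub_apply]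
    rw [summable_geomL1.tsum_sub (summable_blockAvg n), tsum_geomL1, tsum_blockAvg (by omega)]
    norm_num
  rw [gammaL1_eq_tsum (c := 1) (fun i => ?_) hsum.ge, hsum]
  have hn' : 1 / (n : ℝ) ≤ 1 := by
    rw [div_le_one (by positivity)]; exact_mod_cast hn
  exact abs_sub_le_of_nonneg_of_le (geomL1_mem_Icc i).1 (geomL1_mem_Icc i).2
    (blockAvg_nonneg n i) ((blockAvg_le n i).trans hn')

lemma gammaL1_neg_blockAvg_le (n : ℕ) : gammaL1 (-blockAvg n) ≤ 1 / n :=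
  gammaL1_le (fun i => by simpa [abs_of_nonneg (blockAvg_nonneg n i)] using blockAvg_le n i)
    ((tsum_nonpos fun i => by simpa using blockAvg_nonneg n i).trans (by positivity))

lemma tendsto_gammaL1_neg_blockAvg : Tendsto (fun n => gammaL1 (-blockAvg n)) atTop (𝓝 0) :=
  squeeze_zero (fun _ => gammaL1_nonneg) gammaL1_neg_blockAvg_le
    tendsto_one_div_atTop_nhds_zero_nat

theorem stmt_7 :
    ∃ (x₀ : lp (fun _ : ℕ => ℝ) 1) (x : ℕ → lp (fun _ : ℕ => ℝ) 1),
      (∀ i : ℕ, x₀ i = (1 / 2 : ℝ) ^ i) ∧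
      (∀ n i : ℕ, (x n) i = if i < n then (1 : ℝ) / n else 0) ∧
      gammaL1 x₀ = 2 ∧
      (∀ n : ℕ, 1 ≤ n → gammaL1 (x₀ - x n) = 1) ∧
      Tendsto (fun n => gammaL1 ((x₀ - x n) - x₀)) atTop (𝓝 0) ∧
      -- hence the closed unit ball is not sequentially closed w.r.t. γ-convergence:
      ¬ (∀ (y : ℕ → lp (fun _ : ℕ => ℝ) 1) (y₀ : lp (fun _ : ℕ => ℝ) 1),
          (∀ n : ℕ, gammaL1 (y n) ≤ 1) →
          Tendsto (fun n => gammaL1 (y n - y₀)) atTop (𝓝 0) →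
          gammaL1 y₀ ≤ 1) := by
  have hconv : Tendsto (fun n => gammaL1 ((geomL1 - blockAvg n) - geomL1)) atTop (𝓝 0) := by
    simpa only [sub_sub_cancel_left] using tendsto_gammaL1_neg_blockAvg
  refine ⟨geomL1, blockAvg, fun _ => rfl, fun _ _ => rfl, gammaL1_geomL1,
    fun _ => gammaL1_geomL1_sub_blockAvg, hconv, fun hclosed => ?_⟩
  have h := hclosed (fun n => geomL1 - blockAvg (n + 1)) geomL1
    (fun n => (gammaL1_geomL1_sub_blockAvg n.succ_pos).le)
    (hconv.comp (tendsto_add_atTop_nat 1))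
  rw [gammaL1_geomL1] at h
  norm_num at h
end

section
/- Let (X, ⟨·,·⟩) be a real inner product space with induced norm ‖·‖. Then X is complete with respect to ‖·‖ if and only if every closed 1-codimensional linear subspace of X is coproximinal. -/
/-!
In a Hilbert space the orthogonal projection onto a closed subspace is a `1`-Lipschitz
retraction, so it sends every point to a best coapproximation.

Conversely, a best coapproximation `x` of `y` in a subspace `K` forces `y - x ⊥ K`
(compare `‖t • u‖` with `‖(y - x) + t • u‖` for `u ∈ K` and all real `t`). Applied to the
kernel of a nonzero continuous functional `f`, this produces a nonzero vector orthogonal to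
`ker f`, hence a Riesz representative of `f`. If every functional is representable, then for
any `h` in the completion the functional `⟪h, ·⟫` restricted to `X` is represented by some
`w ∈ X`, and density gives `h = w`; so `X` is its own completion.
-/

/-- A linear subspace is `1`-codimensional. -/
def CodimOne {X : Type*} [AddCommGroup X] [Module ℝ X] (K : Submodule ℝ X) : Prop :=
  ∃ v : X, v ∉ K ∧ ∀ x : X, ∃ k ∈ K, ∃ α : ℝ, x = k + α • v

/-- `K` is coproximinal in a normed space: every point has a best coapproximation in `K`. -/
def CoproximinalNorm {X : Type*} [NormedAddCommGroup X] (K : Set X) : Prop :=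
  ∀ y : X, ∃ x ∈ K, ∀ z ∈ K, ‖x - z‖ ≤ ‖y - z‖

open UniformSpace RealInnerProductSpace

theorem LinearMap.codimOne_ker {X : Type*} [AddCommGroup X] [Module ℝ X] {f : X →ₗ[ℝ] ℝ}
    (hf : f ≠ 0) : CodimOne (LinearMap.ker f) := by
  obtain ⟨v, hv⟩ := DFunLike.ne_iff.mp hf
  refine ⟨v, hv, fun x => ⟨x - (f x / f v) • v, ?_, f x / f v, by abel⟩⟩
  simp [div_mul_cancel₀ _ hv]

theorem Submodule.coproximinalNorm_of_hasOrthogonalProjection {X : Type*}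
    [NormedAddCommGroup X] [InnerProductSpace ℝ X] (K : Submodule ℝ X)
    [K.HasOrthogonalProjection] : CoproximinalNorm (K : Set X) := by
  refine fun y => ⟨K.starProjection y, K.starProjection_apply_mem y, fun z hz => ?_⟩
  calc ‖K.starProjection y - z‖ = ‖K.starProjection (y - z)‖ := by
        rw [map_sub, K.starProjection_eq_self_iff.mpr hz]
    _ ≤ ‖y - z‖ := K.norm_starProjection_apply_le _

theorem eq_zero_of_forall_nonneg_add_mul {a b : ℝ} (h : ∀ t, 0 ≤ a + t * b) : b = 0 := by
  by_contra hb
  have := h (-(a + 1) / b)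
  rw [div_mul_cancel₀ _ hb] at this
  linarith

section InnerProductSpace

variable {X : Type*} [NormedAddCommGroup X] [InnerProductSpace ℝ X]

theorem Submodule.sub_mem_orthogonal_of_forall_norm_sub_le {K : Submodule ℝ X} {x y : X}
    (hx : x ∈ K) (hbest : ∀ z ∈ K, ‖x - z‖ ≤ ‖y - z‖) : y - x ∈ Kᗮ := by
  refine (K.mem_orthogonal' _).2 fun u hu =>
    eq_zero_of_forall_nonneg_add_mul (a := ‖y - x‖ ^ 2) fun t => ?_
  have hle := hbest (x - t • u) (K.sub_mem hx (K.smul_mem t hu))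
  rw [sub_sub_cancel, show y - (x - t • u) = (y - x) + t • u by abel] at hle
  have hsq := pow_le_pow_left₀ (norm_nonneg _) hle 2
  rw [norm_add_sq_real, inner_smul_right, norm_smul, mul_pow, Real.norm_eq_abs, sq_abs] at hsq
  nlinarith [sq_nonneg (t * ‖u‖)]

theorem LinearMap.eq_inner_of_mem_orthogonal_ker {f : X →ₗ[ℝ] ℝ} {w : X}
    (hw : w ∈ (LinearMap.ker f)ᗮ) (hfw : f w ≠ 0) (x : X) :
    f x = ⟪(f w / ⟪w, w⟫) • w, x⟫ := by
  have hww : ⟪w, w⟫ ≠ 0 := by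
    rw [Ne, inner_self_eq_zero]
    rintro rfl
    exact hfw (map_zero f)
  have horth := hw (x - (f x / f w) • w) (by simp [div_mul_cancel₀ _ hfw])
  rw [inner_sub_left, inner_smul_left, RCLike.conj_to_real, sub_eq_zero, real_inner_comm] at horth
  rw [inner_smul_left, horth, RCLike.conj_to_real]
  field_simp

theorem exists_inner_eq_of_coproximinalNorm_ker {f : X →ₗ[ℝ] ℝ}
    (hf : CoproximinalNorm (LinearMap.ker f : Set X)) : ∃ w : X, ∀ x, f x = ⟪w, x⟫ := by
  rcases eq_or_ne f 0 with rfl | hf0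
  · exact ⟨0, by simp⟩
  obtain ⟨v, hv⟩ := DFunLike.ne_iff.mp hf0
  obtain ⟨x, hx, hbest⟩ := hf v
  have hfw : f (v - x) ≠ 0 := by rwa [map_sub, LinearMap.mem_ker.mp hx, sub_zero]
  exact ⟨_, LinearMap.eq_inner_of_mem_orthogonal_ker
    (Submodule.sub_mem_orthogonal_of_forall_norm_sub_le hx hbest) hfw⟩

theorem completeSpace_of_forall_exists_inner_eq
    (h : ∀ f : X →L[ℝ] ℝ, ∃ w : X, ∀ x, f x = ⟪w, x⟫) : CompleteSpace X := by
  suffices Set.range ((↑) : X → Completion X) = Set.univ by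
    rw [completeSpace_iff_isComplete_range (Completion.isUniformInducing_coe X), this]
    exact isComplete_univ
  refine Set.eq_univ_of_forall fun y => ?_
  obtain ⟨w, hw⟩ := h ((innerSL ℝ y).comp Completion.toComplL)
  refine ⟨w, (Completion.denseRange_coe.eq_of_inner_left ℝ fun x => ?_).symm⟩
  simpa [Completion.inner_coe] using hw x

end InnerProductSpace

theorem stmt_18 {X : Type*} [NormedAddCommGroup X] [InnerProductSpace ℝ X] :
    CompleteSpace X ↔
      (∀ K : Submodule ℝ X, IsClosed (K : Set X) → CodimOne K →
        CoproximinalNorm (K : Set X)) := by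
  constructor
  · intro _ K hK _
    have : CompleteSpace K := hK.completeSpace_coe
    exact K.coproximinalNorm_of_hasOrthogonalProjection
  · intro H
    refine completeSpace_of_forall_exists_inner_eq fun f => ?_
    rcases eq_or_ne f 0 with rfl | hf
    · exact ⟨0, by simp⟩
    · exact exists_inner_eq_of_coproximinalNorm_ker
        (H _ f.isClosed_ker (LinearMap.codimOne_ker (ContinuousLinearMap.coe_injective.ne hf)))
end
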